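/- arXiv:2206.06650 — 5 statements merged into one kernel-verified Lean document; each statement's English description precedes it below -/
import Mathlib

section
/- (Maximal approximation error.) Let n ≥ 2, let δ > 0 and R ≥ 0 be real numbers, and let z̃_j^{(i)}, ε_j^{(i)} ∈ ℝ (for i = 1, 2 and j = 1, ..., n) satisfy |z̃_j^{(i)}| ≤ R and |ε_j^{(i)}| ≤ δ/2 for all i, j. Set z_j^{(i)} = z̃_j^{(i)} + ε_j^{(i)}, r = (1/(n−1)) ∑_{j=1}^n z_j^{(1)} z_j^{(2)}, and r̃ = (1/(n−1)) ∑_{j=1}^n z̃_j^{(1)} z̃_j^{(2)}. Then |r − r̃| ≤ (nδ/(n−1)) · (R + δ/4). -/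
theorem stmt_5 (n : ℕ) (hn : 2 ≤ n) (δ R : ℝ) (hδ : 0 < δ) (hR : 0 ≤ R)
    (z1t z2t e1 e2 z1 z2 : Fin n → ℝ)
    (hz1t : ∀ j, |z1t j| ≤ R) (hz2t : ∀ j, |z2t j| ≤ R)
    (he1 : ∀ j, |e1 j| ≤ δ / 2) (he2 : ∀ j, |e2 j| ≤ δ / 2)
    (hz1 : ∀ j, z1 j = z1t j + e1 j) (hz2 : ∀ j, z2 j = z2t j + e2 j)
    (r rt : ℝ)
    (hr : r = (1 / ((n : ℝ) - 1)) * ∑ j, z1 j * z2 j)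
    (hrt : rt = (1 / ((n : ℝ) - 1)) * ∑ j, z1t j * z2t j) :
    |r - rt| ≤ ((n : ℝ) * δ / ((n : ℝ) - 1)) * (R + δ / 4) := by
  have hn1 : (1 : ℝ) ≤ (n : ℝ) - 1 := by
    have : (2 : ℝ) ≤ (n : ℝ) := by exact_mod_cast hn
    linarith
  have hpos : (0 : ℝ) < (n : ℝ) - 1 := by linarith
  have key : ∀ j, |z1 j * z2 j - z1t j * z2t j| ≤ δ * (R + δ / 4) := by
    intro j
    have h1 := hz1t j; have h2 := hz2t j; have h3 := he1 j; have h4 := he2 j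
    have eq1 : z1 j * z2 j - z1t j * z2t j
        = z1t j * e2 j + e1 j * z2t j + e1 j * e2 j := by
      rw [hz1 j, hz2 j]; ring
    rw [eq1]
    have b1 : |z1t j * e2 j| ≤ R * (δ / 2) := by
      rw [abs_mul]
      exact mul_le_mul h1 h4 (abs_nonneg _) hR
    have b2 : |e1 j * z2t j| ≤ (δ / 2) * R := by
      rw [abs_mul]
      exact mul_le_mul h3 h2 (abs_nonneg _) (by linarith)
    have b3 : |e1 j * e2 j| ≤ (δ / 2) * (δ / 2) := by
      rw [abs_mul]
      exact mul_le_mul h3 h4 (abs_nonneg _) (by linarith)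
    calc |z1t j * e2 j + e1 j * z2t j + e1 j * e2 j|
        ≤ |z1t j * e2 j| + |e1 j * z2t j| + |e1 j * e2 j| := by
          exact (abs_add_le _ _).trans (by gcongr; exact abs_add_le _ _)
      _ ≤ R * (δ / 2) + (δ / 2) * R + (δ / 2) * (δ / 2) := by linarith
      _ = δ * (R + δ / 4) := by ring
  have hsum : |∑ j, z1 j * z2 j - ∑ j, z1t j * z2t j| ≤ (n : ℝ) * (δ * (R + δ / 4)) := by
    rw [← Finset.sum_sub_distrib]
    calc |∑ j, (z1 j * z2 j - z1t j * z2t j)|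
        ≤ ∑ j : Fin n, |z1 j * z2 j - z1t j * z2t j| := Finset.abs_sum_le_sum_abs _ _
      _ ≤ ∑ _j : Fin n, δ * (R + δ / 4) := Finset.sum_le_sum fun j _ => key j
      _ = (n : ℝ) * (δ * (R + δ / 4)) := by
          rw [Finset.sum_const, Finset.card_univ, Fintype.card_fin]; push_cast; ring
  have : r - rt = (1 / ((n : ℝ) - 1)) * (∑ j, z1 j * z2 j - ∑ j, z1t j * z2t j) := by
    rw [hr, hrt]; ring
  rw [this, abs_mul, abs_of_pos (by positivity : (0:ℝ) < 1 / ((n : ℝ) - 1))]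
  calc 1 / ((n : ℝ) - 1) * |∑ j, z1 j * z2 j - ∑ j, z1t j * z2t j|
      ≤ 1 / ((n : ℝ) - 1) * ((n : ℝ) * (δ * (R + δ / 4))) := by
        apply mul_le_mul_of_nonneg_left hsum (by positivity)
    _ = ((n : ℝ) * δ / ((n : ℝ) - 1)) * (R + δ / 4) := by field_simp
end

section
/- Let n ≥ 2, let δ > 0, R ≥ 0, and M be real numbers with R ≤ n/δ and M ≥ (n−1)/δ² + n·(R/δ + 1/4). Let z̃_j^{(i)}, ε_j^{(i)} ∈ ℝ (for i = 1, 2 and j = 1, ..., n) satisfy |z̃_j^{(i)}| ≤ R and |ε_j^{(i)}| ≤ δ/2 for all i, j, set z_j^{(i)} = z̃_j^{(i)} + ε_j^{(i)}, and suppose the sample correlation r = (1/(n−1)) ∑_{j=1}^n z_j^{(1)} z_j^{(2)} satisfies |r| ≤ 1. Then the approximation r̃ = (1/(n−1)) ∑_{j=1}^n z̃_j^{(1)} z̃_j^{(2)} satisfies (n−1)·|r̃| ≤ δ²·M. -/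
theorem stmt_7 (n : ℕ) (hn : 2 ≤ n) (δ R M : ℝ) (hδ : 0 < δ) (hR : 0 ≤ R)
    (hRn : R ≤ (n : ℝ) / δ)
    (hM : ((n : ℝ) - 1) / δ ^ 2 + (n : ℝ) * (R / δ + 1 / 4) ≤ M)
    (z1t z2t e1 e2 z1 z2 : Fin n → ℝ)
    (hz1t : ∀ j, |z1t j| ≤ R) (hz2t : ∀ j, |z2t j| ≤ R)
    (he1 : ∀ j, |e1 j| ≤ δ / 2) (he2 : ∀ j, |e2 j| ≤ δ / 2)
    (hz1 : ∀ j, z1 j = z1t j + e1 j) (hz2 : ∀ j, z2 j = z2t j + e2 j)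
    (r rt : ℝ)
    (hr : r = (1 / ((n : ℝ) - 1)) * ∑ j, z1 j * z2 j)
    (hrt : rt = (1 / ((n : ℝ) - 1)) * ∑ j, z1t j * z2t j)
    (hr1 : |r| ≤ 1) :
    ((n : ℝ) - 1) * |rt| ≤ δ ^ 2 * M := by
  have hn2 : (2:ℝ) ≤ (n:ℝ) := by exact_mod_cast hn
  have hn1 : (0:ℝ) < (n:ℝ) - 1 := by linarith
  have hS1 : ∑ j, z1 j * z2 j = ((n:ℝ) - 1) * r := by
    rw [hr]; field_simp
  have hS2 : ((n:ℝ) - 1) * rt = ∑ j, z1t j * z2t j := by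
    rw [hrt]; field_simp
  have key : ∑ j, z1t j * z2t j =
      ∑ j, z1 j * z2 j - ∑ j, (z1t j * e2 j + e1 j * z2t j + e1 j * e2 j) := by
    rw [← Finset.sum_sub_distrib]
    apply Finset.sum_congr rfl
    intro j _
    rw [hz1, hz2]; ring
  have hbound : |∑ j, (z1t j * e2 j + e1 j * z2t j + e1 j * e2 j)|
      ≤ (n:ℝ) * (R * (δ/2) + (δ/2) * R + (δ/2) * (δ/2)) := by
    calc |∑ j, (z1t j * e2 j + e1 j * z2t j + e1 j * e2 j)|
        ≤ ∑ j, |z1t j * e2 j + e1 j * z2t j + e1 j * e2 j| :=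
          Finset.abs_sum_le_sum_abs _ _
      _ ≤ ∑ _j : Fin n, (R * (δ/2) + (δ/2) * R + (δ/2) * (δ/2)) := by
          apply Finset.sum_le_sum
          intro j _
          calc |z1t j * e2 j + e1 j * z2t j + e1 j * e2 j|
              ≤ |z1t j * e2 j| + |e1 j * z2t j| + |e1 j * e2 j| := by
                apply (abs_add_le _ _).trans
                gcongr
                exact abs_add_le _ _
            _ ≤ R * (δ/2) + (δ/2) * R + (δ/2) * (δ/2) := by
                rw [abs_mul, abs_mul, abs_mul]
                gcongr <;> first
                  | exact hz1t j | exact hz2t j | exact he1 j | exact he2 j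
                  | exact abs_nonneg _
      _ = (n:ℝ) * (R * (δ/2) + (δ/2) * R + (δ/2) * (δ/2)) := by
          simp only [Finset.sum_const, Finset.card_univ, Fintype.card_fin, nsmul_eq_mul]
  have h1 : |((n:ℝ) - 1) * r| ≤ (n:ℝ) - 1 := by
    rw [abs_mul, abs_of_pos hn1]
    nlinarith
  have hfinal : ((n:ℝ) - 1) * |rt| ≤ ((n:ℝ)-1) + (n:ℝ) * (R * δ + δ^2/4) := by
    have : |((n:ℝ) - 1) * rt| ≤ ((n:ℝ)-1) + (n:ℝ) * (R * δ + δ^2/4) := by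
      rw [hS2, key]
      calc |∑ j, z1 j * z2 j - ∑ j, (z1t j * e2 j + e1 j * z2t j + e1 j * e2 j)|
          ≤ |∑ j, z1 j * z2 j| + |∑ j, (z1t j * e2 j + e1 j * z2t j + e1 j * e2 j)| :=
            abs_sub _ _
        _ ≤ ((n:ℝ)-1) + (n:ℝ) * (R * δ + δ^2/4) := by
            rw [hS1]
            have := hbound
            nlinarith [hn2]
    rwa [abs_mul, abs_of_pos hn1] at this
  have hM' : ((n:ℝ)-1) + (n:ℝ) * (R * δ + δ^2/4) ≤ δ^2 * M := by
    have heq : δ^2 * (((n:ℝ) - 1) / δ ^ 2 + (n:ℝ) * (R / δ + 1 / 4))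
        = ((n:ℝ)-1) + (n:ℝ) * (R * δ + δ^2/4) := by
      field_simp
    have h := mul_le_mul_of_nonneg_left hM (le_of_lt (pow_pos hδ 2))
    rw [heq] at h
    exact h
  linarith
end

section
/- Let n ≥ 2, let δ > 0, R ≥ 0, and M be real numbers with R ≤ n/δ and M ≥ (n−1)/δ² + n·(R/δ + 1/4). Let x_j^{(1)}, x_j^{(2)} ∈ ℤ (for j = 1, ..., n) be integers with |δ·x_j^{(i)}| ≤ R for all i, j, and let ε_j^{(i)} ∈ ℝ satisfy |ε_j^{(i)}| ≤ δ/2. Suppose that the sample correlation r = (1/(n−1)) ∑_{j=1}^n (δx_j^{(1)} + ε_j^{(1)})(δx_j^{(2)} + ε_j^{(2)}) satisfies |r| ≤ 1. Then the integer ∑_{j=1}^n x_j^{(1)} x_j^{(2)} satisfies |∑_{j=1}^n x_j^{(1)} x_j^{(2)}| ≤ M. -/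
theorem stmt_8 (n : ℕ) (hn : 2 ≤ n) (δ R M : ℝ) (hδ : 0 < δ) (hR : 0 ≤ R)
    (hRn : R ≤ (n : ℝ) / δ)
    (hM : ((n : ℝ) - 1) / δ ^ 2 + (n : ℝ) * (R / δ + 1 / 4) ≤ M)
    (x1 x2 : Fin n → ℤ) (e1 e2 : Fin n → ℝ)
    (hx1 : ∀ j, |δ * (x1 j : ℝ)| ≤ R) (hx2 : ∀ j, |δ * (x2 j : ℝ)| ≤ R)
    (he1 : ∀ j, |e1 j| ≤ δ / 2) (he2 : ∀ j, |e2 j| ≤ δ / 2)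
    (hr : |(1 / ((n : ℝ) - 1)) *
        ∑ j, (δ * (x1 j : ℝ) + e1 j) * (δ * (x2 j : ℝ) + e2 j)| ≤ 1) :
    (|∑ j, x1 j * x2 j| : ℤ) ≤ (M : ℝ) := by
  have hn1 : (1:ℝ) ≤ (n:ℝ) - 1 := by
    have : (2:ℝ) ≤ (n:ℝ) := by exact_mod_cast hn
    linarith
  set P := ∑ j, (δ * (x1 j : ℝ) + e1 j) * (δ * (x2 j : ℝ) + e2 j) with hPdef
  have hPbound : |P| ≤ (n:ℝ) - 1 := by
    rw [abs_mul, abs_of_pos (by positivity : (0:ℝ) < 1/((n:ℝ)-1))] at hr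
    have h0 : 0 < (n:ℝ) - 1 := by linarith
    rw [div_mul_eq_mul_div, one_mul, div_le_one h0] at hr
    exact hr
  set S : ℤ := ∑ j, x1 j * x2 j with hSdef
  have hid : P = δ^2 * (S:ℝ) +
      ∑ j, (δ * (x1 j:ℝ) * e2 j + e1 j * (δ * (x2 j:ℝ)) + e1 j * e2 j) := by
    rw [hPdef, hSdef]
    push_cast
    rw [Finset.mul_sum, ← Finset.sum_add_distrib]
    exact Finset.sum_congr rfl fun j _ => by ring
  have hC : |∑ j, (δ * (x1 j:ℝ) * e2 j + e1 j * (δ * (x2 j:ℝ)) + e1 j * e2 j)|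
      ≤ (n:ℝ) * (R * δ + δ^2/4) := by
    calc |∑ j, (δ * (x1 j:ℝ) * e2 j + e1 j * (δ * (x2 j:ℝ)) + e1 j * e2 j)|
        ≤ ∑ j, |δ * (x1 j:ℝ) * e2 j + e1 j * (δ * (x2 j:ℝ)) + e1 j * e2 j| :=
          Finset.abs_sum_le_sum_abs _ _
      _ ≤ ∑ _j : Fin n, (R * δ + δ^2/4) := by
          apply Finset.sum_le_sum
          intro j _
          have h1 : |δ * (x1 j:ℝ) * e2 j| ≤ R * (δ/2) := by
            rw [abs_mul]
            exact mul_le_mul (hx1 j) (he2 j) (abs_nonneg _) hR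
          have h2 : |e1 j * (δ * (x2 j:ℝ))| ≤ (δ/2) * R := by
            rw [abs_mul]
            exact mul_le_mul (he1 j) (hx2 j) (abs_nonneg _) (by linarith)
          have h3 : |e1 j * e2 j| ≤ (δ/2) * (δ/2) := by
            rw [abs_mul]
            exact mul_le_mul (he1 j) (he2 j) (abs_nonneg _) (by linarith)
          calc |δ * (x1 j:ℝ) * e2 j + e1 j * (δ * (x2 j:ℝ)) + e1 j * e2 j|
              ≤ |δ * (x1 j:ℝ) * e2 j| + |e1 j * (δ * (x2 j:ℝ))| + |e1 j * e2 j| :=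
                (abs_add_le _ _).trans (by gcongr; exact abs_add_le _ _)
            _ ≤ R * (δ/2) + (δ/2) * R + (δ/2) * (δ/2) := by linarith
            _ = R * δ + δ^2/4 := by ring
      _ = (n:ℝ) * (R * δ + δ^2/4) := by
          rw [Finset.sum_const, Finset.card_univ, Fintype.card_fin, nsmul_eq_mul]
  have habsS : |(S:ℝ)| ≤ M := by
    have hkey : |δ^2 * (S:ℝ)| ≤ ((n:ℝ) - 1) + (n:ℝ) * (R * δ + δ^2/4) := by
      have : δ^2 * (S:ℝ) = P - ∑ j, (δ * (x1 j:ℝ) * e2 j + e1 j * (δ * (x2 j:ℝ)) + e1 j * e2 j) := by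
        rw [hid]; ring
      rw [this]
      calc |P - _| ≤ |P| + |_| := abs_sub _ _
        _ ≤ _ := by linarith
    rw [abs_mul, abs_of_pos (by positivity : (0:ℝ) < δ^2)] at hkey
    have hδ2 : (0:ℝ) < δ^2 := by positivity
    have : |(S:ℝ)| ≤ (((n:ℝ) - 1) + (n:ℝ) * (R * δ + δ^2/4)) / δ^2 :=
      (le_div_iff₀' hδ2).2 hkey
    calc |(S:ℝ)| ≤ (((n:ℝ) - 1) + (n:ℝ) * (R * δ + δ^2/4)) / δ^2 := this
      _ = ((n:ℝ) - 1) / δ^2 + (n:ℝ) * (R / δ + 1/4) := by field_simp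
      _ ≤ M := hM
  calc ((|S| : ℤ) : ℝ) = |(S:ℝ)| := by push_cast; ring
    _ ≤ M := habsS
end

section
/- (Parameter-choice lemma / recovery of the approximate correlation.) Let p > 2 be a prime and set M = (p−1)/2. Let n ≥ 2, let δ > 0 and R ≥ 0 be real with R ≤ n/δ and (M : ℝ) ≥ (n−1)/δ² + n·(R/δ + 1/4). Let x_j^{(1)}, x_j^{(2)} ∈ ℤ (for j = 1, ..., n) satisfy |δ·x_j^{(i)}| ≤ R for all i, j, let ε_j^{(i)} ∈ ℝ satisfy |ε_j^{(i)}| ≤ δ/2, and suppose the sample correlation r = (1/(n−1)) ∑_{j=1}^n (δx_j^{(1)} + ε_j^{(1)})(δx_j^{(2)} + ε_j^{(2)}) satisfies |r| ≤ 1. Then the approximate sample correlation r̃ = (1/(n−1)) ∑_{j=1}^n (δx_j^{(1)})(δx_j^{(2)}) satisfies r̃ = (1/(n−1)) · δ² · ψ(∑_{j=1}^n (x_j^{(1)} mod p)·(x_j^{(2)} mod p)), where the sum is computed in F_p = ZMod p and ψ denotes the unique integer representative of absolute value at most M (ZMod.valMinAbs). -/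
theorem stmt_9 (p : ℕ) [Fact (Nat.Prime p)] (hp2 : 2 < p)
    (n : ℕ) (hn : 2 ≤ n) (δ R : ℝ) (hδ : 0 < δ) (hR : 0 ≤ R)
    (hRn : R ≤ (n : ℝ) / δ)
    (hM : ((n : ℝ) - 1) / δ ^ 2 + (n : ℝ) * (R / δ + 1 / 4)
        ≤ (((p - 1) / 2 : ℕ) : ℝ))
    (x1 x2 : Fin n → ℤ) (e1 e2 : Fin n → ℝ)
    (hx1 : ∀ j, |δ * (x1 j : ℝ)| ≤ R) (hx2 : ∀ j, |δ * (x2 j : ℝ)| ≤ R)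
    (he1 : ∀ j, |e1 j| ≤ δ / 2) (he2 : ∀ j, |e2 j| ≤ δ / 2)
    (hr : |(1 / ((n : ℝ) - 1)) *
        ∑ j, (δ * (x1 j : ℝ) + e1 j) * (δ * (x2 j : ℝ) + e2 j)| ≤ 1) :
    (1 / ((n : ℝ) - 1)) * ∑ j, (δ * (x1 j : ℝ)) * (δ * (x2 j : ℝ))
      = (1 / ((n : ℝ) - 1)) * (δ ^ 2 *
          (((∑ j, (x1 j : ZMod p) * (x2 j : ZMod p)).valMinAbs : ℤ) : ℝ)) := by
  set S : ℤ := ∑ j, x1 j * x2 j with hS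
  have hn1 : (1 : ℝ) ≤ (n : ℝ) - 1 := by
    have : (2 : ℝ) ≤ (n : ℝ) := by exact_mod_cast hn
    linarith
  have hn1' : (0 : ℝ) < (n : ℝ) - 1 := by linarith
  -- bound on the big sum
  have hT : |∑ j, (δ * (x1 j : ℝ) + e1 j) * (δ * (x2 j : ℝ) + e2 j)| ≤ (n : ℝ) - 1 := by
    rw [abs_mul, abs_of_pos (by positivity : (0:ℝ) < 1 / ((n:ℝ)-1))] at hr
    calc |∑ j, (δ * (x1 j : ℝ) + e1 j) * (δ * (x2 j : ℝ) + e2 j)|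
        = ((n:ℝ)-1) * ((1 / ((n:ℝ)-1)) * |∑ j, (δ * (x1 j : ℝ) + e1 j) * (δ * (x2 j : ℝ) + e2 j)|) := by
          field_simp
      _ ≤ ((n:ℝ)-1) * 1 := by
          exact mul_le_mul_of_nonneg_left hr (by linarith)
      _ = (n:ℝ) - 1 := by ring
  -- cross term bound
  have hC : |∑ j, (δ * (x1 j : ℝ) * e2 j + e1 j * (δ * (x2 j : ℝ)) + e1 j * e2 j)|
      ≤ (n : ℝ) * (R * δ + δ ^ 2 / 4) := by
    calc |∑ j, (δ * (x1 j : ℝ) * e2 j + e1 j * (δ * (x2 j : ℝ)) + e1 j * e2 j)|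
        ≤ ∑ j : Fin n, |δ * (x1 j : ℝ) * e2 j + e1 j * (δ * (x2 j : ℝ)) + e1 j * e2 j| :=
          Finset.abs_sum_le_sum_abs _ _
      _ ≤ ∑ _j : Fin n, (R * δ + δ ^ 2 / 4) := by
          apply Finset.sum_le_sum
          intro j _
          have h1 : |δ * (x1 j : ℝ) * e2 j| ≤ R * (δ / 2) := by
            rw [abs_mul]
            exact mul_le_mul (hx1 j) (he2 j) (abs_nonneg _) hR
          have h2 : |e1 j * (δ * (x2 j : ℝ))| ≤ (δ / 2) * R := by
            rw [abs_mul]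
            exact mul_le_mul (he1 j) (hx2 j) (abs_nonneg _) (by linarith)
          have h3 : |e1 j * e2 j| ≤ (δ / 2) * (δ / 2) := by
            rw [abs_mul]
            exact mul_le_mul (he1 j) (he2 j) (abs_nonneg _) (by linarith)
          calc |δ * (x1 j : ℝ) * e2 j + e1 j * (δ * (x2 j : ℝ)) + e1 j * e2 j|
              ≤ |δ * (x1 j : ℝ) * e2 j| + |e1 j * (δ * (x2 j : ℝ))| + |e1 j * e2 j| :=
                (abs_add_le _ _).trans (by gcongr; exact abs_add_le _ _)
            _ ≤ R * (δ/2) + (δ/2) * R + (δ/2) * (δ/2) := by linarith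
            _ = R * δ + δ ^ 2 / 4 := by ring
      _ = (n : ℝ) * (R * δ + δ ^ 2 / 4) := by
          rw [Finset.sum_const, Finset.card_univ, Fintype.card_fin, nsmul_eq_mul]
  -- δ² S decomposition
  have hdec : δ ^ 2 * (S : ℝ) =
      (∑ j, (δ * (x1 j : ℝ) + e1 j) * (δ * (x2 j : ℝ) + e2 j))
      - ∑ j, (δ * (x1 j : ℝ) * e2 j + e1 j * (δ * (x2 j : ℝ)) + e1 j * e2 j) := by
    rw [← Finset.sum_sub_distrib, hS]
    push_cast
    rw [Finset.mul_sum]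
    apply Finset.sum_congr rfl
    intro j _
    ring
  have hSbound : |(S : ℝ)| ≤ (((p - 1) / 2 : ℕ) : ℝ) := by
    have h1 : |δ ^ 2 * (S : ℝ)| ≤ ((n:ℝ) - 1) + (n : ℝ) * (R * δ + δ ^ 2 / 4) := by
      rw [hdec]
      exact (abs_sub _ _).trans (by linarith)
    have h2 : |δ ^ 2 * (S : ℝ)| = δ ^ 2 * |(S : ℝ)| := by
      rw [abs_mul, abs_of_pos (by positivity)]
    rw [h2] at h1
    have hδ2 : (0:ℝ) < δ ^ 2 := by positivity
    have key : ((n : ℝ) - 1) / δ ^ 2 + (n : ℝ) * (R / δ + 1 / 4)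
        = (((n:ℝ) - 1) + (n : ℝ) * (R * δ + δ ^ 2 / 4)) / δ ^ 2 := by
      field_simp
    rw [key] at hM
    calc |(S : ℝ)| = δ ^ 2 * |(S : ℝ)| / δ ^ 2 := by field_simp
      _ ≤ (((n:ℝ) - 1) + (n : ℝ) * (R * δ + δ ^ 2 / 4)) / δ ^ 2 := by gcongr
      _ ≤ _ := hM
  -- integer bound
  have hM2 : 2 * ((p - 1) / 2 : ℕ) = p - 1 := by
    obtain ⟨k, hk⟩ := (Fact.out (p := p.Prime)).odd_of_ne_two (by omega)
    omega
  have hSint : |S| ≤ (((p - 1) / 2 : ℕ) : ℤ) := by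
    rw [← Int.cast_abs, ← Int.cast_natCast (R := ℝ)] at hSbound
    exact Int.cast_le.mp hSbound
  have hcast : (∑ j, (x1 j : ZMod p) * (x2 j : ZMod p)) = (S : ZMod p) := by
    rw [hS]; push_cast; rfl
  have hval : (∑ j, (x1 j : ZMod p) * (x2 j : ZMod p)).valMinAbs = S := by
    rw [ZMod.valMinAbs_spec]
    refine ⟨hcast, ?_, ?_⟩
    · have := abs_le.mp hSint
      have : -(((p-1)/2 : ℕ) : ℤ) ≤ S := this.1
      have hp1 : ((p:ℤ) - 1) = 2 * (((p-1)/2 : ℕ) : ℤ) := by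
        have := hM2; push_cast; omega
      omega
    · have := (abs_le.mp hSint).2
      have hp1 : ((p:ℤ) - 1) = 2 * (((p-1)/2 : ℕ) : ℤ) := by
        have := hM2; push_cast; omega
      omega
  rw [hval]
  congr 1
  rw [hS]
  push_cast
  rw [Finset.mul_sum]
  apply Finset.sum_congr rfl
  intro j _
  ring
end

section
/- (Correctness of the exact-correlation protocol.) Let p > 2 be a prime and set M = (p−1)/2. Let n ≥ 2, let δ > 0 and R ≥ 0 be real with R ≤ n/δ and (M : ℝ) ≥ (n−1)/δ² + n·(R/δ + 1/4). Let x_j^{(1)}, x_j^{(2)} ∈ ℤ (for j = 1, ..., n) satisfy |δ·x_j^{(i)}| ≤ R for all i, j, let ε_j^{(i)} ∈ ℝ satisfy |ε_j^{(i)}| ≤ δ/2, set z_j^{(i)} = δx_j^{(i)} + ε_j^{(i)}, and suppose r = (1/(n−1)) ∑_{j=1}^n z_j^{(1)} z_j^{(2)} satisfies |r| ≤ 1. Then r = (1/(n−1)) · ( δ² · ψ(∑_{j=1}^n (x_j^{(1)} mod p)·(x_j^{(2)} mod p)) + ∑_{j=1}^n z_j^{(1)} ε_j^{(2)} + ∑_{j=1}^n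 z_j^{(2)} ε_j^{(1)} − ∑_{j=1}^n ε_j^{(1)} ε_j^{(2)} ), where the first sum is computed in F_p = ZMod p and ψ denotes the unique integer representative of absolute value at most M (ZMod.valMinAbs). In particular, the participants recover the exact sample correlation from the field computation together with the revealed error terms. -/
theorem stmt_10 (p : ℕ) [Fact (Nat.Prime p)] (hp2 : 2 < p)
    (n : ℕ) (hn : 2 ≤ n) (δ R : ℝ) (hδ : 0 < δ) (hR : 0 ≤ R)
    (hRn : R ≤ (n : ℝ) / δ)
    (hM : ((n : ℝ) - 1) / δ ^ 2 + (n : ℝ) * (R / δ + 1 / 4)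
        ≤ (((p - 1) / 2 : ℕ) : ℝ))
    (x1 x2 : Fin n → ℤ) (e1 e2 : Fin n → ℝ)
    (hx1 : ∀ j, |δ * (x1 j : ℝ)| ≤ R) (hx2 : ∀ j, |δ * (x2 j : ℝ)| ≤ R)
    (he1 : ∀ j, |e1 j| ≤ δ / 2) (he2 : ∀ j, |e2 j| ≤ δ / 2)
    (z1 z2 : Fin n → ℝ)
    (hz1 : ∀ j, z1 j = δ * (x1 j : ℝ) + e1 j)
    (hz2 : ∀ j, z2 j = δ * (x2 j : ℝ) + e2 j)
    (r : ℝ) (hr : r = (1 / ((n : ℝ) - 1)) * ∑ j, z1 j * z2 j)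
    (hr1 : |r| ≤ 1) :
    r = (1 / ((n : ℝ) - 1)) *
        (δ ^ 2 * (((∑ j, (x1 j : ZMod p) * (x2 j : ZMod p)).valMinAbs : ℤ) : ℝ)
          + ∑ j, z1 j * e2 j + ∑ j, z2 j * e1 j - ∑ j, e1 j * e2 j) := by
  haveI : NeZero p := ⟨(Fact.out (p := Nat.Prime p)).ne_zero⟩
  set S : ℤ := ∑ j, x1 j * x2 j with hS
  -- pointwise identity
  have hpt : ∀ j, z1 j * z2 j =
      δ ^ 2 * ((x1 j : ℝ) * (x2 j : ℝ)) +
        (z1 j * e2 j + z2 j * e1 j - e1 j * e2 j) := by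
    intro j; rw [hz1 j, hz2 j]; ring
  have hsum : ∑ j, z1 j * z2 j =
      δ ^ 2 * (S : ℝ) + ∑ j, (z1 j * e2 j + z2 j * e1 j - e1 j * e2 j) := by
    have h0 : ∑ j, z1 j * z2 j =
        ∑ j, (δ ^ 2 * ((x1 j : ℝ) * (x2 j : ℝ)) +
          (z1 j * e2 j + z2 j * e1 j - e1 j * e2 j)) :=
      Finset.sum_congr rfl fun j _ => hpt j
    rw [h0, Finset.sum_add_distrib, ← Finset.mul_sum]
    push_cast [hS]
    ring
  -- bound each error term
  have hterm : ∀ j, |z1 j * e2 j + z2 j * e1 j - e1 j * e2 j| ≤ R * δ + δ ^ 2 / 4 := by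
    intro j
    have h1 : z1 j * e2 j + z2 j * e1 j - e1 j * e2 j
        = (δ * (x1 j : ℝ)) * e2 j + (δ * (x2 j : ℝ)) * e1 j + e1 j * e2 j := by
      rw [hz1 j, hz2 j]; ring
    rw [h1]
    have b1 : |(δ * (x1 j : ℝ)) * e2 j| ≤ R * (δ / 2) := by
      rw [abs_mul]
      exact mul_le_mul (hx1 j) (he2 j) (abs_nonneg _) hR
    have b2 : |(δ * (x2 j : ℝ)) * e1 j| ≤ R * (δ / 2) := by
      rw [abs_mul]
      exact mul_le_mul (hx2 j) (he1 j) (abs_nonneg _) hR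
    have b3 : |e1 j * e2 j| ≤ δ ^ 2 / 4 := by
      rw [abs_mul]
      calc |e1 j| * |e2 j| ≤ (δ / 2) * (δ / 2) :=
            mul_le_mul (he1 j) (he2 j) (abs_nonneg _) (by linarith)
        _ = δ ^ 2 / 4 := by ring
    calc |(δ * (x1 j : ℝ)) * e2 j + (δ * (x2 j : ℝ)) * e1 j + e1 j * e2 j|
        ≤ |(δ * (x1 j : ℝ)) * e2 j + (δ * (x2 j : ℝ)) * e1 j| + |e1 j * e2 j| :=
          abs_add_le _ _
      _ ≤ |(δ * (x1 j : ℝ)) * e2 j| + |(δ * (x2 j : ℝ)) * e1 j| + |e1 j * e2 j| := by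
          gcongr; exact abs_add_le _ _
      _ ≤ R * (δ / 2) + R * (δ / 2) + δ ^ 2 / 4 := by gcongr
      _ = R * δ + δ ^ 2 / 4 := by ring
  have hE : |∑ j, (z1 j * e2 j + z2 j * e1 j - e1 j * e2 j)| ≤
      (n : ℝ) * (R * δ + δ ^ 2 / 4) := by
    calc |∑ j, (z1 j * e2 j + z2 j * e1 j - e1 j * e2 j)|
        ≤ ∑ j : Fin n, (R * δ + δ ^ 2 / 4) :=
          (Finset.abs_sum_le_sum_abs _ _).trans
            (Finset.sum_le_sum fun j _ => hterm j)
      _ = (n : ℝ) * (R * δ + δ ^ 2 / 4) := by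
          rw [Finset.sum_const, Finset.card_univ, Fintype.card_fin, nsmul_eq_mul]
  have hn1 : (1 : ℝ) ≤ (n : ℝ) - 1 := by
    have : (2 : ℝ) ≤ (n : ℝ) := by exact_mod_cast hn
    linarith
  have hzz : |∑ j, z1 j * z2 j| ≤ (n : ℝ) - 1 := by
    have : ∑ j, z1 j * z2 j = ((n : ℝ) - 1) * r := by
      rw [hr]; field_simp
    rw [this, abs_mul, abs_of_nonneg (by linarith : (0:ℝ) ≤ (n : ℝ) - 1)]
    nlinarith [abs_nonneg r]
  -- bound on S
  have hSb : |(S : ℝ)| ≤ (((p - 1) / 2 : ℕ) : ℝ) := by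
    have h1 : |δ ^ 2 * (S : ℝ)| ≤ ((n : ℝ) - 1) + (n : ℝ) * (R * δ + δ ^ 2 / 4) := by
      have : δ ^ 2 * (S : ℝ) =
          ∑ j, z1 j * z2 j - ∑ j, (z1 j * e2 j + z2 j * e1 j - e1 j * e2 j) := by
        rw [hsum]; ring
      rw [this]
      calc _ ≤ |∑ j, z1 j * z2 j| + |∑ j, (z1 j * e2 j + z2 j * e1 j - e1 j * e2 j)| :=
            abs_sub _ _
        _ ≤ _ := by gcongr
    have hδ2 : (0 : ℝ) < δ ^ 2 := by positivity
    rw [abs_mul, abs_of_pos hδ2] at h1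
    rw [div_add' _ _ _ (ne_of_gt hδ2)] at hM
    have h2 : ((n : ℝ) - 1) + (n : ℝ) * (R / δ + 1 / 4) * δ ^ 2
        ≤ (((p - 1) / 2 : ℕ) : ℝ) * δ ^ 2 := by
      have := (div_le_iff₀ hδ2).mp hM
      linarith
    have h3 : (n : ℝ) * (R / δ + 1 / 4) * δ ^ 2 = (n : ℝ) * (R * δ + δ ^ 2 / 4) := by
      field_simp
    rw [h3] at h2
    have h4 : δ ^ 2 * |(S : ℝ)| ≤ (((p - 1) / 2 : ℕ) : ℝ) * δ ^ 2 := by linarith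
    nlinarith
  -- valMinAbs computation
  have hcast : (∑ j, (x1 j : ZMod p) * (x2 j : ZMod p)) = ((S : ℤ) : ZMod p) := by
    push_cast [hS]; rfl
  have hSZ : |S| ≤ (((p - 1) / 2 : ℕ) : ℤ) := by
    rw [show ((((p - 1) / 2 : ℕ)) : ℝ) = (((((p - 1) / 2 : ℕ)) : ℤ) : ℝ) by norm_cast,
      ← Int.cast_abs, Int.cast_le] at hSb
    exact hSb
  have hvma : (∑ j, (x1 j : ZMod p) * (x2 j : ZMod p)).valMinAbs = S := by
    rw [hcast]
    rw [ZMod.valMinAbs_spec]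
    have hle : ((p - 1) / 2 : ℕ) * 2 + 1 ≤ p := by omega
    have hle' : (((p - 1) / 2 : ℕ) : ℤ) * 2 + 1 ≤ (p : ℤ) := by exact_mod_cast hle
    have h1 := (abs_le.mp hSZ).1
    have h2 := (abs_le.mp hSZ).2
    exact ⟨rfl, by omega, by omega⟩
  rw [hvma, hr, hsum]
  rw [Finset.sum_sub_distrib, Finset.sum_add_distrib]
  ring
end
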